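/- Let G be a contracting self-similar subgroup of Aut(T), let h_x, h'_x ∈ G for each x ∈ X, and let π be a permutation of X. Then the unique automorphism g of T acting on X as π and whose states on the first level satisfy g|_x = h_x · g · h'_x for every x ∈ X is finite-state. -/

import Mathlib

open List

/-- Vertices of the rooted `d`-ary tree `T`: finite words over the alphabet
`X = Fin d`. -/
abbrev Vertex (d : ℕ) := List (Fin d)

/-- `g` is an automorphism of the rooted `d`-ary tree: a bijection of the
vertex set `X*` preserving word length and the prefix relation. -/
def IsTreeAut {d : ℕ} (g : Equiv.Perm (Vertex d)) : Prop :=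
  (∀ v : Vertex d, (g v).length = v.length) ∧
    ∀ v w : Vertex d, g v <+: g (v ++ w)

theorem IsTreeAut.prefix_mono {d : ℕ} {g : Equiv.Perm (Vertex d)} (hg : IsTreeAut g)
    {u u' : Vertex d} (h : u <+: u') : g u <+: g u' := by
  obtain ⟨t, rfl⟩ := h
  exact hg.2 u t

/-- The automorphism group `Aut(T)` of the rooted `d`-ary tree, as a subgroup
of the group of permutations of the vertex set. -/
def treeAut (d : ℕ) : Subgroup (Equiv.Perm (Vertex d)) where
  carrier := {g | IsTreeAut g}
  one_mem' := ⟨fun _ => rfl, fun v w => ⟨w, rfl⟩⟩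
  mul_mem' := by
    intro g h hg hh
    obtain ⟨hg1, hg2⟩ := hg
    obtain ⟨hh1, hh2⟩ := hh
    refine ⟨fun v => ?_, fun v w => ?_⟩
    · simp [Equiv.Perm.mul_apply, hg1, hh1]
    · obtain ⟨t, ht⟩ := hh2 v w
      simp only [Equiv.Perm.mul_apply]
      rw [← ht]
      exact hg2 (h v) t
  inv_mem' := by
    intro g hgmem
    obtain ⟨hg1, hg2⟩ := hgmem
    have hg : IsTreeAut g := ⟨hg1, hg2⟩
    have hlen' : ∀ v : Vertex d, (g⁻¹ v).length = v.length := by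
      intro v
      conv_rhs => rw [(Equiv.Perm.inv_eq_iff_eq (f := g) (x := v)).mp rfl]
      rw [hg1]
    refine ⟨hlen', fun v w => ?_⟩
    have hle : (g⁻¹ v).length ≤ (g⁻¹ (v ++ w)).length := by
      have h1 := hlen' v
      have h2 := hlen' (v ++ w)
      rw [List.length_append] at h2
      omega
    have htp : (g⁻¹ (v ++ w)).take (g⁻¹ v).length <+: g⁻¹ (v ++ w) :=
      List.take_prefix _ _
    have hgtp : g ((g⁻¹ (v ++ w)).take (g⁻¹ v).length) <+: v ++ w := by
      have := hg.prefix_mono htp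
      rwa [← (Equiv.Perm.inv_eq_iff_eq (f := g) (x := v ++ w)).mp rfl] at this
    have hlen_tp : (g ((g⁻¹ (v ++ w)).take (g⁻¹ v).length)).length = v.length := by
      rw [hg1, List.length_take, min_eq_left hle, hlen' v]
    have hveq : g ((g⁻¹ (v ++ w)).take (g⁻¹ v).length) = v := by
      have h1 := List.prefix_iff_eq_take.mp hgtp
      have h2 := List.prefix_iff_eq_take.mp (List.prefix_append v w)
      rw [h1, hlen_tp]
      exact h2.symm
    have hkey : (g⁻¹ (v ++ w)).take (g⁻¹ v).length = g⁻¹ v := by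
      apply g.injective
      rw [hveq, ← (Equiv.Perm.inv_eq_iff_eq (f := g) (x := v)).mp rfl]
    rw [← hkey]
    exact htp

open scoped Classical in
/-- The state (section) `g|_v` of `g` at the vertex `v` : the unique
automorphism satisfying `g (v ++ w) = g v ++ (g|_v) w` for all `w`. -/
noncomputable def state {d : ℕ} (g : Equiv.Perm (Vertex d)) (v : Vertex d) :
    Equiv.Perm (Vertex d) :=
  if h : Function.Bijective (fun w : Vertex d => (g (v ++ w)).drop v.length) then
    Equiv.ofBijective _ h
  else 1

/-- A finite-state automorphism: one having finitely many states.  The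
finite-state automorphisms form the group `F(X)`. -/
def FiniteState {d : ℕ} (g : Equiv.Perm (Vertex d)) : Prop :=
  (Set.range fun v : Vertex d => state g v).Finite

/-- The cardinality of the orbit `Orb_a(v)` of the vertex `v` under the cyclic
group generated by `a`. -/
noncomputable def orbitCard {d : ℕ} (a : Equiv.Perm (Vertex d)) (v : Vertex d) : ℕ :=
  Nat.card (Set.range fun n : ℤ => (a ^ n) v)

/-- The orbit-signalizer `OS(a) = { a^m|_v : v ∈ X^*, m = |Orb_a(v)| }`. -/
noncomputable def OS {d : ℕ} (a : Equiv.Perm (Vertex d)) : Set (Equiv.Perm (Vertex d)) :=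
  {s | ∃ v : Vertex d, s = state (a ^ orbitCard a v) v}

/-- `a` has finite orbit-signalizer. -/
def FiniteOS {d : ℕ} (a : Equiv.Perm (Vertex d)) : Prop := (OS a).Finite

/-- A self-similar (state-closed) subgroup. -/
def SelfSimilar {d : ℕ} (G : Subgroup (Equiv.Perm (Vertex d))) : Prop :=
  ∀ g ∈ G, ∀ v : Vertex d, state g v ∈ G

/-- A contracting group: there is a finite set `N ⊆ G` such that every
`g ∈ G` has all its states in `N` from some level on. -/
def ContractingGroup {d : ℕ} (G : Subgroup (Equiv.Perm (Vertex d))) : Prop :=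
  ∃ N : Set (Equiv.Perm (Vertex d)), N.Finite ∧ N ⊆ (G : Set (Equiv.Perm (Vertex d))) ∧
    ∀ g ∈ G, ∃ n : ℕ, ∀ v : Vertex d, n ≤ v.length → state g v ∈ N

/-- A contracting automorphism: the self-similar group generated by all of its
states is contracting. -/
def ContractingAut {d : ℕ} (f : Equiv.Perm (Vertex d)) : Prop :=
  ContractingGroup (Subgroup.closure (Set.range fun v : Vertex d => state f v))

/-- The activity sequence `θ_k(g)`: the number of vertices `v` of level `k`
whose state `g|_v` acts nontrivially on the first level `X`. -/
noncomputable def theta {d : ℕ} (g : Equiv.Perm (Vertex d)) (k : ℕ) : ℕ :=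
  Nat.card {v : Vertex d // v.length = k ∧ ∃ x : Fin d, state g v [x] ≠ [x]}

/-- A bounded automorphism: a finite-state automorphism with bounded activity
sequence.  The bounded automorphisms form the group `Pol(0)`. -/
def BoundedAut {d : ℕ} (g : Equiv.Perm (Vertex d)) : Prop :=
  FiniteState g ∧ ∃ C : ℕ, ∀ k : ℕ, theta g k ≤ C

/-- A polynomial automorphism (an element of `Pol(∞)`): a finite-state
automorphism whose activity sequence is polynomially bounded. -/
def PolyAut {d : ℕ} (g : Equiv.Perm (Vertex d)) : Prop :=
  FiniteState g ∧ ∃ p : Polynomial ℕ, ∀ k : ℕ, theta g k ≤ p.eval k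

/-- A finitary automorphism (an element of `Pol(-1)`): all states at some
level are trivial. -/
def Finitary {d : ℕ} (g : Equiv.Perm (Vertex d)) : Prop :=
  ∃ k : ℕ, ∀ v : Vertex d, v.length = k → state g v = 1

/-- A functionally recursive automorphism: a member of some finitely generated
self-similar subgroup of `Aut(T)`.  These form the group `FR(X)`. -/
def FunctionallyRecursive {d : ℕ} (g : Equiv.Perm (Vertex d)) : Prop :=
  ∃ G : Subgroup (Equiv.Perm (Vertex d)), G ≤ treeAut d ∧ SelfSimilar G ∧
    (∃ S : Set (Equiv.Perm (Vertex d)), S.Finite ∧ G = Subgroup.closure S) ∧ g ∈ G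

/-!
Let `N ⊆ G` be a finite state-closed set containing `1`, the nucleus and all `h x`, `h' x`, and
choose `L` such that every product of two elements of `N` has all its states from level `L` on in
the nucleus. Write the states of `g` as `p * g * q`. Going down one level, the recursion
multiplies `p` and `q` by one more element of `N`; going down `L + 1` levels, contraction halves
the number of factors from `N` in `p` and `q` while the recursion adds `L + 1` new ones. Hence
all states of `g` lie in the finite set `N ^ (2 * (L + 1)) * {g} * N ^ (2 * (L + 1))`.
-/

open Pointwise

namespace TreeAut

variable {d : ℕ} {g p q : Equiv.Perm (Vertex d)}

theorem apply_append_eq (hg : g ∈ treeAut d) (v w : Vertex d) :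
    g (v ++ w) = g v ++ (g (v ++ w)).drop v.length := by
  obtain ⟨t, ht⟩ := hg.2 v w
  rw [← ht, ← hg.1 v, List.drop_left]

theorem state_bijective (hg : g ∈ treeAut d) (v : Vertex d) :
    Function.Bijective fun w : Vertex d => (g (v ++ w)).drop v.length := by
  refine ⟨fun w₁ w₂ hw => ?_, fun u => ⟨(g⁻¹ (g v ++ u)).drop v.length, ?_⟩⟩
  · have h₁ := apply_append_eq hg v w₁
    rw [show (g (v ++ w₁)).drop v.length = _ from hw, ← apply_append_eq hg v w₂] at h₁
    exact List.append_cancel_left (g.injective h₁)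
  · have hinv := apply_append_eq ((treeAut d).inv_mem hg) (g v) u
    rw [← Equiv.Perm.mul_apply, inv_mul_cancel, Equiv.Perm.one_apply, hg.1 v] at hinv
    simp only
    rw [← hinv, ← Equiv.Perm.mul_apply, mul_inv_cancel, Equiv.Perm.one_apply, ← hg.1 v,
      List.drop_left]

theorem state_apply (hg : g ∈ treeAut d) (v w : Vertex d) :
    state g v w = (g (v ++ w)).drop v.length := by
  rw [state, dif_pos (state_bijective hg v)]
  rfl

theorem apply_append (hg : g ∈ treeAut d) (v w : Vertex d) :
    g (v ++ w) = g v ++ state g v w := by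
  rw [state_apply hg]
  exact apply_append_eq hg v w

theorem state_mem (hg : g ∈ treeAut d) (v : Vertex d) : state g v ∈ treeAut d := by
  refine ⟨fun w => ?_, fun w w' => ?_⟩
  · rw [state_apply hg, List.length_drop, hg.1, List.length_append]
    omega
  · have hpre := hg.2 (v ++ w) w'
    rw [List.append_assoc, apply_append hg, apply_append hg] at hpre
    exact (List.prefix_append_right_inj (g v)).mp hpre

theorem state_nil (hg : g ∈ treeAut d) : state g [] = g := by
  ext w
  rw [state_apply hg]
  rfl

theorem state_append (hg : g ∈ treeAut d) (u v : Vertex d) :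
    state g (u ++ v) = state (state g u) v := by
  ext w
  rw [state_apply hg, state_apply (state_mem hg u), state_apply hg, List.append_assoc,
    List.drop_drop, List.length_append, Nat.add_comm]

theorem state_mul (hp : p ∈ treeAut d) (hq : q ∈ treeAut d) (v : Vertex d) :
    state (p * q) v = state p (q v) * state q v := by
  ext w
  rw [state_apply (mul_mem hp hq), Equiv.Perm.mul_apply, Equiv.Perm.mul_apply, state_apply hq,
    state_apply hp, ← apply_append_eq hq v w, hq.1]

theorem state_mul_mul (hp : p ∈ treeAut d) (hg : g ∈ treeAut d) (hq : q ∈ treeAut d)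
    (w : Vertex d) :
    state (p * g * q) w = state p (g (q w)) * state g (q w) * state q w := by
  rw [state_mul (mul_mem hp hg) hq, state_mul hp hg]

end TreeAut

theorem state_one {d : ℕ} (v : Vertex d) : state (1 : Equiv.Perm (Vertex d)) v = 1 := by
  ext w
  rw [TreeAut.state_apply (treeAut d).one_mem]
  simp

section StateClosure

variable {d : ℕ}

def StateClosed (S : Set (Equiv.Perm (Vertex d))) : Prop :=
  ∀ a ∈ S, ∀ v : Vertex d, state a v ∈ S

def stateClosure (S : Set (Equiv.Perm (Vertex d))) : Set (Equiv.Perm (Vertex d)) :=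
  ⋃ a ∈ S, Set.range (state a)

variable {S : Set (Equiv.Perm (Vertex d))}

theorem subset_stateClosure (hS : S ⊆ treeAut d) : S ⊆ stateClosure S :=
  fun _ ha => Set.mem_biUnion ha ⟨[], TreeAut.state_nil (hS ha)⟩

theorem stateClosed_stateClosure (hS : S ⊆ treeAut d) : StateClosed (stateClosure S) := by
  intro b hb v
  obtain ⟨a, ha, u, rfl⟩ := Set.mem_iUnion₂.mp hb
  exact Set.mem_biUnion ha ⟨u ++ v, TreeAut.state_append (hS ha) u v⟩

theorem SelfSimilar.stateClosure_subset {G : Subgroup (Equiv.Perm (Vertex d))}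
    (hG : SelfSimilar G) (hS : S ⊆ G) : stateClosure S ⊆ G := by
  intro b hb
  obtain ⟨a, ha, u, rfl⟩ := Set.mem_iUnion₂.mp hb
  exact hG a (hS ha) u

theorem Set.Finite.stateClosure (hS : S.Finite) (hfs : ∀ a ∈ S, FiniteState a) :
    (stateClosure S).Finite :=
  hS.biUnion hfs

theorem StateClosed.pow (hS : StateClosed S) (hST : S ⊆ treeAut d) (k : ℕ) :
    StateClosed (S ^ k) := by
  induction k with
  | zero =>
    rintro a rfl v
    exact state_one v
  | succ k ih =>
    rintro _ ⟨a, ha, b, hb, rfl⟩ v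
    rw [TreeAut.state_mul (Subgroup.pow_subset hST ha) (hST hb)]
    exact Set.mul_mem_mul (ih a ha _) (hS b hb v)

end StateClosure

section Contracting

variable {d : ℕ} {N : Set (Equiv.Perm (Vertex d))} {a : Equiv.Perm (Vertex d)}

theorem finiteState_of_eventually_mem (hN : N.Finite)
    (ha : ∃ n : ℕ, ∀ v : Vertex d, n ≤ v.length → state a v ∈ N) : FiniteState a := by
  obtain ⟨n, hn⟩ := ha
  refine (((List.finite_length_lt (Fin d) n).image (state a)).union hN).subset ?_
  rintro _ ⟨v, rfl⟩
  by_cases hv : v.length < n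
  · exact Or.inl ⟨v, hv, rfl⟩
  · exact Or.inr (hn v (not_lt.mp hv))

theorem exists_uniform_level_of_finite {F : Set (Equiv.Perm (Vertex d))} (hF : F.Finite)
    (hlevel : ∀ a ∈ F, ∃ n : ℕ, ∀ v : Vertex d, n ≤ v.length → state a v ∈ N) :
    ∃ L : ℕ, ∀ a ∈ F, ∀ v : Vertex d, L ≤ v.length → state a v ∈ N := by
  have hev :
      ∀ᶠ L in Filter.atTop, ∀ a ∈ F, ∀ v : Vertex d, L ≤ v.length → state a v ∈ N := by
    refine hF.eventually_all.mpr fun a ha => ?_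
    obtain ⟨n, hn⟩ := hlevel a ha
    exact Filter.eventually_atTop.mpr ⟨n, fun L hL v hv => hn v (hL.trans hv)⟩
  exact hev.exists

theorem state_mem_pow_of_mem_pow_two_mul (hNT : N ⊆ treeAut d) {L : ℕ}
    (hL : ∀ c ∈ N * N, ∀ v : Vertex d, L ≤ v.length → state c v ∈ N) (k : ℕ) :
    ∀ a ∈ N ^ (2 * k), ∀ v : Vertex d, L ≤ v.length → state a v ∈ N ^ k := by
  induction k with
  | zero =>
    rintro a rfl v -
    exact state_one v
  | succ k ih =>
    intro a ha v hv
    rw [mul_add, mul_one, pow_add] at ha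
    obtain ⟨b, hb, c, hc, rfl⟩ := ha
    have hcT := Subgroup.pow_subset hNT hc
    rw [sq] at hc
    beta_reduce
    rw [TreeAut.state_mul (Subgroup.pow_subset hNT hb) hcT, pow_succ]
    exact Set.mul_mem_mul (ih b hb _ (by rwa [hcT.1])) (hL c hc v hv)

end Contracting

theorem Set.Finite.pow {M : Type*} [Monoid M] {s : Set M} (hs : s.Finite) (n : ℕ) :
    (s ^ n).Finite := by
  induction n with
  | zero => exact Set.finite_one
  | succ n ih => exact pow_succ s n ▸ ih.mul hs

section Recursion

variable {d : ℕ} {N : Set (Equiv.Perm (Vertex d))} {g : Equiv.Perm (Vertex d)}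

theorem state_mul_mul_mem {p q : Equiv.Perm (Vertex d)} {A B C D : Set (Equiv.Perm (Vertex d))}
    (hp : p ∈ treeAut d) (hg : g ∈ treeAut d) (hq : q ∈ treeAut d) {w : Vertex d}
    (hpw : state p (g (q w)) ∈ A) (hgw : state g (q w) ∈ C * {g} * D) (hqw : state q w ∈ B) :
    state (p * g * q) w ∈ A * C * {g} * (D * B) := by
  obtain ⟨_, ⟨c, hc, g', hg', rfl⟩, e, he, hce⟩ := hgw
  rw [Set.mem_singleton_iff.mp hg'] at hce
  rw [TreeAut.state_mul_mul hp hg hq, ← hce]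
  have hassoc : state p (g (q w)) * (c * g * e) * state q w
      = state p (g (q w)) * c * g * (e * state q w) := by group
  rw [hassoc]
  exact Set.mul_mem_mul (Set.mul_mem_mul (Set.mul_mem_mul hpw hc) rfl) (Set.mul_mem_mul he hqw)

variable (hNT : N ⊆ treeAut d) (hN : StateClosed N) (hg : g ∈ treeAut d)
  (hrec : ∀ x : Fin d, state g [x] ∈ N * {g} * N)
include hNT hN hg hrec

theorem state_mem_pow_length (v : Vertex d) :
    state g v ∈ N ^ v.length * {g} * N ^ v.length := by
  induction v using List.reverseRecOn with
  | nil =>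
    simp [TreeAut.state_nil hg]
  | append_singleton v y ih =>
    obtain ⟨_, ⟨p, hp, g', hg', rfl⟩, q, hq, he⟩ := ih
    rw [Set.mem_singleton_iff.mp hg'] at he
    beta_reduce at he
    have hpT := Subgroup.pow_subset hNT hp
    have hqT := Subgroup.pow_subset hNT hq
    obtain ⟨z, hz⟩ := List.length_eq_one_iff.mp (hqT.1 [y])
    have hstep := state_mul_mul_mem hpT hg hqT ((hN.pow hNT _) p hp _) (hz ▸ hrec z)
      ((hN.pow hNT _) q hq _)
    rwa [← pow_succ, ← pow_succ', he, ← TreeAut.state_append hg,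
      ← length_singleton (a := y), ← length_append] at hstep

theorem state_mem_pow_two_mul (h1 : 1 ∈ N) {L : ℕ}
    (hL : ∀ c ∈ N * N, ∀ v : Vertex d, L ≤ v.length → state c v ∈ N) (v : Vertex d) :
    state g v ∈ N ^ (2 * (L + 1)) * {g} * N ^ (2 * (L + 1)) := by
  induction hn : v.length using Nat.strong_induction_on generalizing v with
  | _ n ih =>
  by_cases hle : n ≤ 2 * (L + 1)
  · have hmono := Set.pow_subset_pow_right h1 hle
    exact Set.mul_subset_mul (Set.mul_subset_mul_right hmono) hmono
      (hn ▸ state_mem_pow_length hNT hN hg hrec v)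
  obtain ⟨_, ⟨p, hp, g', hg', rfl⟩, q, hq, he⟩ :=
    ih (n - (L + 1)) (by omega) (v.take (n - (L + 1))) (by rw [length_take]; omega)
  rw [Set.mem_singleton_iff.mp hg'] at he
  beta_reduce at he
  set w := v.drop (n - (L + 1))
  have hw : w.length = L + 1 := by rw [length_drop]; omega
  have hpT := Subgroup.pow_subset hNT hp
  have hqT := Subgroup.pow_subset hNT hq
  have hqw : (q w).length = L + 1 := hqT.1 w ▸ hw
  have hstep := state_mul_mul_mem hpT hg hqT
    (state_mem_pow_of_mem_pow_two_mul hNT hL _ p hp _ (by rw [hg.1, hqw]; omega))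
    (hqw ▸ state_mem_pow_length hNT hN hg hrec (q w))
    (state_mem_pow_of_mem_pow_two_mul hNT hL _ q hq w (by omega))
  rwa [← pow_add, ← two_mul, he, ← TreeAut.state_append hg, take_append_drop]
    at hstep

theorem finiteState_of_state_mem (hNfin : N.Finite) (h1 : 1 ∈ N) {L : ℕ}
    (hL : ∀ c ∈ N * N, ∀ v : Vertex d, L ≤ v.length → state c v ∈ N) : FiniteState g :=
  (((hNfin.pow _).mul (Set.finite_singleton g)).mul (hNfin.pow _)).subset <|
    Set.range_subset_iff.mpr (state_mem_pow_two_mul hNT hN hg hrec h1 hL)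

end Recursion

theorem recursion_with_contracting_coefficients_finiteState_general
    (d : ℕ) (G : Subgroup (Equiv.Perm (Vertex d)))
    (hG : G ≤ treeAut d) (hss : SelfSimilar G) (hc : ContractingGroup G)
    (h h' : Fin d → Equiv.Perm (Vertex d))
    (hmem : ∀ x : Fin d, h x ∈ G) (hmem' : ∀ x : Fin d, h' x ∈ G)
    (g : Equiv.Perm (Vertex d)) (hg : IsTreeAut g)
    (hrec : ∀ x : Fin d, state g ([x] : Vertex d) = h' x * g * h x) :
    FiniteState g := by
  obtain ⟨N₀, hN₀fin, hN₀G, hcontr⟩ := hc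
  set S : Set (Equiv.Perm (Vertex d)) := insert 1 (N₀ ∪ Set.range h ∪ Set.range h')
  have hSG : S ⊆ G := Set.insert_subset G.one_mem <| Set.union_subset
    (Set.union_subset hN₀G (Set.range_subset_iff.mpr hmem)) (Set.range_subset_iff.mpr hmem')
  have hSN := subset_stateClosure (hSG.trans hG)
  have hNG : stateClosure S ⊆ G := hss.stateClosure_subset hSG
  have hNfin : (stateClosure S).Finite :=
    ((hN₀fin.union (Set.finite_range h)).union (Set.finite_range h')).insert 1 |>.stateClosure
      fun a ha => finiteState_of_eventually_mem hN₀fin (hcontr a (hSG ha))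
  obtain ⟨L, hL⟩ := exists_uniform_level_of_finite (hNfin.mul hNfin)
    fun c hc => hcontr c (Subgroup.mul_subset hNG hNG hc)
  refine finiteState_of_state_mem (hNG.trans hG) (stateClosed_stateClosure (hSG.trans hG)) hg
    (fun x => ?_) hNfin (hSN (Set.mem_insert 1 _))
    fun c hc v hv => hSN (Or.inr (Or.inl (Or.inl (hL c hc v hv))))
  rw [hrec x]
  exact Set.mul_mem_mul (Set.mul_mem_mul (hSN (Or.inr (Or.inr ⟨x, rfl⟩))) rfl)
    (hSN (Or.inr (Or.inl (Or.inr ⟨x, rfl⟩))))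

/-- Let `G` be a contracting self-similar subgroup of
`Aut(T)`, let `h_x, h'_x ∈ G` for each letter `x`, and let `π` be a permutation
of `X`.  The unique automorphism `g` acting on the first level as `π` whose
first-level states satisfy `g|_x = h_x · g · h'_x` (in the left-action
convention, `g|_x = h'_x * g * h_x`) is finite-state. -/
theorem recursion_with_contracting_coefficients_finiteState
    (d : ℕ) (hd : 2 ≤ d) (G : Subgroup (Equiv.Perm (Vertex d)))
    (hG : G ≤ treeAut d) (hss : SelfSimilar G) (hc : ContractingGroup G)
    (h h' : Fin d → Equiv.Perm (Vertex d))
    (hmem : ∀ x : Fin d, h x ∈ G) (hmem' : ∀ x : Fin d, h' x ∈ G)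
    (π : Equiv.Perm (Fin d))
    (g : Equiv.Perm (Vertex d)) (hg : IsTreeAut g)
    (hact : ∀ x : Fin d, g ([x] : Vertex d) = ([π x] : Vertex d))
    (hrec : ∀ x : Fin d, state g ([x] : Vertex d) = h' x * g * h x) :
    FiniteState g :=
  recursion_with_contracting_coefficients_finiteState_general d G hG hss hc h h' hmem hmem' g hg
    hrec
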